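/- Let H be a nonempty hypergraph on vertex set V(H), let e ∈ H be a hyperedge and let s ⊆ e be nonempty. Let H₁ = H − (e \ s) = {f \ (e \ s) : f ∈ H}, let H₂ = H₁ \ N_{H₁}(s) be the hypergraph obtained from H₁ by removing all hyperedges meeting s, and let V₁ = V(H₁) \ (V(H₂) ∪ s). Then |hit_H(e,s)| = 2^{|V₁|} · |hit_{H₂}| (where |hit_∅| = 1 by convention). -/

import Mathlib

/-!
A set `t` satisfies `t ∩ e = s` exactly when it contains `s` and avoids `e \ s`, and a set
avoiding `e \ s` meets `f` iff it meets `f \ (e \ s)`; so `hit_H(e,s)` is the family of hitting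
sets of `H₁` that contain `s`. Such a set automatically meets every edge of `N_{H₁}(s)`, and it
meets an edge of `H₂` exactly through its trace on `V(H₂)`. As `V(H₁)` is the disjoint union of
`s`, `V₁` and `V(H₂)`, the trace on `V₁` is arbitrary and the trace on `V(H₂)` ranges over
`hit_{H₂}`.
-/

/-- The vertex set `V(H) = ⋃_{e ∈ H} e` of a hypergraph `H`. -/
def vertexSet {α : Type*} [DecidableEq α] (H : Finset (Finset α)) : Finset α := H.sup id

/-- The set `hit_H` of all hitting sets of a hypergraph `H`:
subsets `t ⊆ V(H)` meeting every hyperedge of `H`.  (For `H = ∅` this is `{∅}`,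
matching the convention `|hit_∅| = 1`.) -/
def hitSets {α : Type*} [DecidableEq α] (H : Finset (Finset α)) : Finset (Finset α) :=
  (vertexSet H).powerset.filter (fun t => ∀ e ∈ H, (t ∩ e).Nonempty)

open Finset

section

variable {α : Type*} [DecidableEq α]

def neighbourhood (H : Finset (Finset α)) (s : Finset α) : Finset (Finset α) :=
  H.filter (fun f => (f ∩ s).Nonempty)

lemma mem_vertexSet {H : Finset (Finset α)} {x : α} : x ∈ vertexSet H ↔ ∃ f ∈ H, x ∈ f := by
  simp [vertexSet, mem_sup]

lemma subset_vertexSet {H : Finset (Finset α)} {f : Finset α} (hf : f ∈ H) :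
    f ⊆ vertexSet H :=
  le_sup (f := id) hf

lemma vertexSet_image_sdiff (H : Finset (Finset α)) (p : Finset α) :
    vertexSet (H.image (· \ p)) = vertexSet H \ p := by
  ext x
  simp only [mem_vertexSet, mem_image, mem_sdiff]
  constructor
  · rintro ⟨_, ⟨f, hf, rfl⟩, hx⟩
    exact ⟨⟨f, hf, (mem_sdiff.mp hx).1⟩, (mem_sdiff.mp hx).2⟩
  · rintro ⟨⟨f, hf, hx⟩, hxp⟩
    exact ⟨f \ p, ⟨f, hf, rfl⟩, mem_sdiff.mpr ⟨hx, hxp⟩⟩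

lemma inter_eq_iff_subset_and_disjoint_sdiff {e s t : Finset α} (hs : s ⊆ e) :
    t ∩ e = s ↔ s ⊆ t ∧ Disjoint t (e \ s) := by
  rw [subset_iff] at hs
  simp only [Finset.ext_iff, subset_iff, disjoint_left, mem_inter, mem_sdiff]
  grind

lemma filter_hitSets_inter_eq {H : Finset (Finset α)} {e s : Finset α} (hs : s ⊆ e) :
    (hitSets H).filter (fun t => t ∩ e = s) =
      (hitSets (H.image (· \ (e \ s)))).filter (s ⊆ ·) := by
  ext t
  simp only [hitSets, mem_filter, mem_powerset, forall_mem_image, vertexSet_image_sdiff,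
    subset_sdiff, inter_eq_iff_subset_and_disjoint_sdiff hs]
  have inter_sdiff (f : Finset α) (h : Disjoint t (e \ s)) : t ∩ (f \ (e \ s)) = t ∩ f := by
    rw [← inter_sdiff_assoc, sdiff_eq_self_of_disjoint (h.mono_left inter_subset_left)]
  constructor
  · rintro ⟨⟨htV, hhit⟩, hst, hdisj⟩
    exact ⟨⟨⟨htV, hdisj⟩, fun f hf => inter_sdiff f hdisj ▸ hhit f hf⟩, hst⟩
  · rintro ⟨⟨⟨htV, hdisj⟩, hhit⟩, hst⟩
    exact ⟨⟨htV, fun f hf => inter_sdiff f hdisj ▸ hhit hf⟩, hst, hdisj⟩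

lemma card_filter_powerset_union {A B : Finset α} (h : Disjoint A B)
    (P : Finset α → Prop) [DecidablePred P] :
    #{t ∈ (A ∪ B).powerset | P (t ∩ B)} = 2 ^ #A * #{b ∈ B.powerset | P b} := by
  have union_inter {a b : Finset α} (ha : a ⊆ A) (hb : b ⊆ B) :
      (a ∪ b) ∩ A = a ∧ (a ∪ b) ∩ B = b := by
    rw [union_inter_distrib_right, union_inter_distrib_right, inter_eq_left.mpr ha,
      inter_eq_left.mpr hb, disjoint_iff_inter_eq_empty.mp (h.symm.mono_left hb),
      disjoint_iff_inter_eq_empty.mp (h.mono_left ha), union_empty, empty_union]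
    exact ⟨rfl, rfl⟩
  rw [← card_powerset A, ← card_product]
  refine card_nbij' (fun t => (t ∩ A, t ∩ B)) (fun q => q.1 ∪ q.2) ?_ ?_ ?_ ?_
  · intro t ht
    simp only [mem_coe, mem_filter, mem_powerset, mem_product] at ht ⊢
    exact ⟨inter_subset_right, inter_subset_right, ht.2⟩
  · rintro ⟨a, b⟩ hab
    simp only [mem_coe, mem_filter, mem_powerset, mem_product] at hab ⊢
    rw [(union_inter hab.1 hab.2.1).2]
    exact ⟨union_subset_union hab.1 hab.2.1, hab.2.2⟩
  · intro t ht
    simp only [mem_coe, mem_filter, mem_powerset] at ht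
    dsimp only
    rw [← inter_union_distrib_left, inter_eq_left.mpr ht.1]
  · rintro ⟨a, b⟩ hab
    simp only [mem_coe, mem_filter, mem_powerset, mem_product] at hab
    exact Prod.ext_iff.mpr (union_inter hab.1 hab.2.1)

lemma card_filter_powerset_superset {C s : Finset α} (hs : s ⊆ C)
    (Q : Finset α → Prop) [DecidablePred Q] :
    #{t ∈ C.powerset | s ⊆ t ∧ Q t} = #{u ∈ (C \ s).powerset | Q (u ∪ s)} := by
  refine card_nbij' (· \ s) (· ∪ s) ?_ ?_ ?_ ?_
  all_goals intro t ht; simp only [mem_coe, mem_filter, mem_powerset] at ht ⊢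
  · exact ⟨sdiff_subset_sdiff ht.1 le_rfl, by rw [sdiff_union_of_subset ht.2.1]; exact ht.2.2⟩
  · exact ⟨union_subset (ht.1.trans sdiff_subset) hs, subset_union_right, ht.2⟩
  · exact sdiff_union_of_subset ht.2.1
  · exact union_sdiff_cancel_right (disjoint_of_subset_left ht.1 sdiff_disjoint)

lemma forall_union_inter_nonempty_iff (H : Finset (Finset α)) (s u : Finset α) :
    (∀ f ∈ H, ((u ∪ s) ∩ f).Nonempty) ↔ ∀ f ∈ H \ neighbourhood H s, (u ∩ f).Nonempty := by
  simp only [union_inter_distrib_right, union_nonempty, inter_comm s, neighbourhood, mem_sdiff,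
    mem_filter]
  grind

lemma card_filter_hitSets_superset {H : Finset (Finset α)} {s : Finset α}
    (hs : s ⊆ vertexSet H) :
    #{t ∈ hitSets H | s ⊆ t} =
      2 ^ #(vertexSet H \ (vertexSet (H \ neighbourhood H s) ∪ s)) *
        #(hitSets (H \ neighbourhood H s)) := by
  set G := H \ neighbourhood H s
  set B := vertexSet G
  set A := vertexSet H \ (B ∪ s)
  have hB : B ⊆ vertexSet H \ s := Finset.sup_le fun f hf => by
    simp only [G, neighbourhood, mem_sdiff, mem_filter, not_and, not_nonempty_iff_eq_empty] at hf
    exact subset_sdiff.mpr ⟨subset_vertexSet hf.1, disjoint_iff_inter_eq_empty.mpr (hf.2 hf.1)⟩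
  have hAB : vertexSet H \ s = A ∪ B := by
    ext x
    have hxB := @hB x
    simp only [A, mem_sdiff, mem_union] at hxB ⊢
    tauto
  have hdisj : Disjoint A B := disjoint_sdiff_self_left.mono_right subset_union_left
  calc #{t ∈ hitSets H | s ⊆ t}
      = #{t ∈ (vertexSet H).powerset | s ⊆ t ∧ ∀ f ∈ H, (t ∩ f).Nonempty} := by
        rw [hitSets, filter_filter]
        exact congrArg card (filter_congr fun _ _ => and_comm)
    _ = #{u ∈ (A ∪ B).powerset | ∀ f ∈ H, ((u ∪ s) ∩ f).Nonempty} := by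
        rw [card_filter_powerset_superset hs, hAB]
    _ = #{u ∈ (A ∪ B).powerset | ∀ f ∈ G, (u ∩ B ∩ f).Nonempty} := by
        refine congrArg card (filter_congr fun u _ => ?_)
        rw [forall_union_inter_nonempty_iff]
        refine forall₂_congr fun f hf => ?_
        rw [inter_assoc, inter_eq_right.mpr (subset_vertexSet hf)]
    _ = 2 ^ #A * #(hitSets G) :=
        card_filter_powerset_union hdisj (fun b => ∀ f ∈ G, (b ∩ f).Nonempty)

end

theorem stmt_7_general {α : Type*} [DecidableEq α] (H : Finset (Finset α))
    (e : Finset α) (he : e ∈ H)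
    (s : Finset α) (hs : s ⊆ e)
    (H₁ H₂ : Finset (Finset α)) (V₁ : Finset α)
    (hH₁ : H₁ = H.image (fun f => f \ (e \ s)))
    (hH₂ : H₂ = H₁ \ (H₁.filter (fun f => (f ∩ s).Nonempty)))
    (hV₁ : V₁ = vertexSet H₁ \ (vertexSet H₂ ∪ s)) :
    ((hitSets H).filter (fun t => t ∩ e = s)).card = 2 ^ V₁.card * (hitSets H₂).card := by
  have hsH₁ : s ∈ H₁ := hH₁ ▸ mem_image.mpr ⟨e, he, Finset.sdiff_sdiff_eq_self hs⟩
  subst hH₂ hV₁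
  rw [filter_hitSets_inter_eq hs, ← hH₁]
  exact card_filter_hitSets_superset (subset_vertexSet hsH₁)

/-- Let `H` be a nonempty hypergraph, `e ∈ H` and `∅ ≠ s ⊆ e`.  With
`H₁ = H − (e \ s)`, `H₂ = H₁ \ N_{H₁}(s)` and `V₁ = V(H₁) \ (V(H₂) ∪ s)`, one has
`|hit_H(e,s)| = 2^{|V₁|} · |hit_{H₂}|`. -/
theorem stmt_7 {α : Type*} [DecidableEq α] (H : Finset (Finset α))
    (hH : H.Nonempty) (e : Finset α) (he : e ∈ H)
    (s : Finset α) (hs : s ⊆ e) (hsne : s.Nonempty)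
    (H₁ H₂ : Finset (Finset α)) (V₁ : Finset α)
    (hH₁ : H₁ = H.image (fun f => f \ (e \ s)))
    (hH₂ : H₂ = H₁ \ (H₁.filter (fun f => (f ∩ s).Nonempty)))
    (hV₁ : V₁ = vertexSet H₁ \ (vertexSet H₂ ∪ s)) :
    ((hitSets H).filter (fun t => t ∩ e = s)).card = 2 ^ V₁.card * (hitSets H₂).card :=
  stmt_7_general H e he s hs H₁ H₂ V₁ hH₁ hH₂ hV₁
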